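/- For every integer r ≥ 2, the following identity holds in ℋ: ∇(a b^{r−1}) = (−1)^{r+1} · 3 · a^{r} + Σ_{j=1}^{r−2} (−1)^{j+1} a^{j}(b−a)^{r−j}, where juxtaposition and powers denote concatenation (so a^{j} is the j-fold concatenation of a, and (b−a)^{m} is the m-fold concatenation power of b−a expanded multilinearly into a signed sum of words). -/

import Mathlib

/-!
Splitting off the first letter of a shuffle, `(x u) ш (y v) = x (u ш y v) + y (x u ш v)`, turns
the signed sums `S_u(n) = Σ_{i+j=n} (-1)^j (u b^i) ш a^j` into the recursions
`S_∅(n+1) = (b - a) S_∅(n)` and `S_{xu}(n+1) = x S_u(n+1) - a S_{xu}(n)`. Hence `S_∅(n) = (b - a)^n`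
and `S_a(k) = Σ_{l ≤ k} (-1)^l a^{l+1} (b - a)^{k-l}`. As `τ(b^k) = (-a)^k`, the terms `i ≥ 1` of
`∇(a b^k)` add up to `S_a(k)`, while the term `i = 0` is `τ(a b^k) = (-1)^k (a^{k+1} + a^k b)`:
it cancels the word `a^k b` of the term `l = k - 1` of `S_a(k)` and triples the coefficient of
`a^{k+1}`.
-/

inductive Letter | a | b
deriving DecidableEq

abbrev Word := List Letter

/-- The algebra `ℋ`: formal `ℚ`-linear combinations of words. -/
abbrev H := Word →₀ ℚ

/-- The list of shuffles of two words (with multiplicity). -/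
def shuffleList : Word → Word → List Word
  | [], v => [v]
  | u, [] => [u]
  | x :: u, y :: v =>
      ((shuffleList u (y :: v)).map fun t => x :: t) ++
      ((shuffleList (x :: u) v).map fun t => y :: t)
termination_by u v => u.length + v.length
decreasing_by all_goals simp

/-- The shuffle product `u * v` of two words, as an element of `ℋ`. -/
noncomputable def shW (u v : Word) : H :=
  ((shuffleList u v).map fun t => Finsupp.single t (1 : ℚ)).sum

/-- The shuffle product of a word with an element of `ℋ`, extended linearly. -/
noncomputable def shWH (u : Word) (g : H) : H := g.sum fun v cv => cv • shW u v

/-- Concatenation of a word with an element of `ℋ`, extended linearly. -/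
noncomputable def concatWH (u : Word) (g : H) : H :=
  g.sum fun v c => Finsupp.single (u ++ v) c

/-- The list of all words of length `m`. -/
def wordsOfLength : ℕ → List Word
  | 0 => [[]]
  | n + 1 =>
      ((wordsOfLength n).map fun t => Letter.a :: t) ++
      ((wordsOfLength n).map fun t => Letter.b :: t)

/-- `(a+b)^m`, the `m`-fold concatenation power of `a+b` expanded multilinearly:
the sum of all words of length `m`. -/
noncomputable def abPow (m : ℕ) : H :=
  ((wordsOfLength m).map fun t => Finsupp.single t (1 : ℚ)).sum

/-- `(b-a)^m`, the `m`-fold concatenation power of `b-a` expanded multilinearly: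
the signed sum of all words of length `m`. -/
noncomputable def bmaPow (m : ℕ) : H :=
  ((wordsOfLength m).map fun t =>
    Finsupp.single t ((-1 : ℚ) ^ t.count Letter.a)).sum

/-- Concatenation product on `ℋ`, extended bilinearly from words. -/
noncomputable def concatH (f g : H) : H :=
  f.sum fun u cu => g.sum fun v cv => Finsupp.single (u ++ v) (cu * cv)

/-- `τ(a) = a + b`, `τ(b) = -a`, as elements of `ℋ`. -/
noncomputable def tauL : Letter → H
  | .a => Finsupp.single [Letter.a] 1 + Finsupp.single [Letter.b] 1
  | .b => - Finsupp.single [Letter.a] 1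

/-- `τ(c₁⋯c_n) = τ(c_n)⋯τ(c₁)`, expanded multilinearly with respect to concatenation. -/
noncomputable def tauH : Word → H
  | [] => Finsupp.single [] 1
  | c :: w => concatH (tauH w) (tauL c)

/-- The operator `∇` : `∇(c₁⋯c_n) = Σ_{i=0}^{n} (c₁⋯c_i) * τ(c_{i+1}⋯c_n)`. -/
noncomputable def nablaOp (w : Word) : H :=
  ∑ i ∈ Finset.range (w.length + 1), shWH (w.take i) (tauH (w.drop i))

open Finset Letter

section Concatenation

lemma concatWH_eq_lmapDomain (u : Word) : concatWH u = Finsupp.lmapDomain ℚ ℚ (u ++ ·) := rfl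

lemma concatWH_single (u v : Word) (c : ℚ) :
    concatWH u (Finsupp.single v c) = Finsupp.single (u ++ v) c := by
  simp [concatWH_eq_lmapDomain]

lemma concatWH_add (u : Word) (g h : H) : concatWH u (g + h) = concatWH u g + concatWH u h :=
  map_add (Finsupp.lmapDomain ℚ ℚ (u ++ ·)) g h

lemma concatWH_sub (u : Word) (g h : H) : concatWH u (g - h) = concatWH u g - concatWH u h :=
  map_sub (Finsupp.lmapDomain ℚ ℚ (u ++ ·)) g h

lemma concatWH_neg (u : Word) (g : H) : concatWH u (-g) = -concatWH u g :=
  map_neg (Finsupp.lmapDomain ℚ ℚ (u ++ ·)) g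

lemma concatWH_smul (u : Word) (c : ℚ) (g : H) : concatWH u (c • g) = c • concatWH u g :=
  map_smul (Finsupp.lmapDomain ℚ ℚ (u ++ ·)) c g

lemma concatWH_sum {ι : Type*} (u : Word) (s : Finset ι) (f : ι → H) :
    concatWH u (∑ i ∈ s, f i) = ∑ i ∈ s, concatWH u (f i) :=
  map_sum (Finsupp.lmapDomain ℚ ℚ (u ++ ·)) f s

lemma concatWH_concatWH (u v : Word) (g : H) :
    concatWH u (concatWH v g) = concatWH (u ++ v) g := by
  simp only [concatWH_eq_lmapDomain, Finsupp.lmapDomain_apply, ← Finsupp.mapDomain_comp]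
  simp [Function.comp_def]

lemma concatH_single_left (u : Word) (c : ℚ) (g : H) :
    concatH (Finsupp.single u c) g = c • concatWH u g := by
  simp [concatH, concatWH, Finsupp.smul_sum]

end Concatenation

section Shuffle

lemma shW_nil_left (v : Word) : shW [] v = Finsupp.single v 1 := by
  simp [shW, shuffleList]

lemma shW_nil_right (u : Word) : shW u [] = Finsupp.single u 1 := by
  cases u <;> simp [shW, shuffleList]

lemma shW_cons_cons (x y : Letter) (u v : Word) :
    shW (x :: u) (y :: v) = concatWH [x] (shW u (y :: v)) + concatWH [y] (shW (x :: u) v) := by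
  simp [shW, shuffleList, concatWH_eq_lmapDomain, map_list_sum, Function.comp_def]

lemma shWH_single (u v : Word) (c : ℚ) : shWH u (Finsupp.single v c) = c • shW u v := by
  simp [shWH]

lemma shWH_nil (g : H) : shWH [] g = g := by
  simp [shWH, shW_nil_left, Finsupp.sum_single]

end Shuffle

section Tau

lemma tauH_replicate_b (k : ℕ) :
    tauH (List.replicate k b) = Finsupp.single (List.replicate k a) ((-1) ^ k) := by
  induction k with
  | zero => rfl
  | succ k ih =>
    rw [List.replicate_succ, tauH, ih, concatH_single_left, tauL, concatWH_neg, concatWH_single,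
      ← List.replicate_succ', ← Finsupp.single_neg, Finsupp.smul_single, smul_eq_mul, pow_succ,
      mul_neg_one]

lemma tauH_a_cons_replicate_b (k : ℕ) :
    tauH (a :: List.replicate k b) = (-1 : ℚ) ^ k •
      (Finsupp.single (List.replicate (k + 1) a) 1 +
        Finsupp.single (List.replicate k a ++ [b]) 1) := by
  rw [tauH, tauH_replicate_b, concatH_single_left, tauL, concatWH_add, concatWH_single,
    concatWH_single, ← List.replicate_succ']

end Tau

section BMinusAPower

lemma bmaPow_zero : bmaPow 0 = Finsupp.single [] 1 := by
  simp [bmaPow, wordsOfLength]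

lemma bmaPow_succ (n : ℕ) :
    bmaPow (n + 1) = concatWH [b] (bmaPow n) - concatWH [a] (bmaPow n) := by
  simp only [bmaPow, wordsOfLength, List.map_append, List.map_map, List.sum_append,
    concatWH_eq_lmapDomain, map_list_sum, Function.comp_def, Finsupp.lmapDomain_apply,
    Finsupp.mapDomain_single, List.sum_neg, sub_eq_add_neg]
  simp [pow_succ, add_comm]

lemma bmaPow_one : bmaPow 1 = Finsupp.single [b] 1 - Finsupp.single [a] 1 := by
  rw [bmaPow_succ, bmaPow_zero, concatWH_single, concatWH_single]
  rfl

end BMinusAPower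

section SignedShuffle

noncomputable def signedShuffle (u : Word) (n : ℕ) : H :=
  ∑ p ∈ antidiagonal n, (-1 : ℚ) ^ p.2 • shW (u ++ List.replicate p.1 b) (List.replicate p.2 a)

/-- The words of `(-1)^j • w * a^j` whose first letter comes from `a^j`. -/
noncomputable def signedShuffleLeadA (w : Word) : ℕ → H
  | 0 => 0
  | j + 1 => (-1 : ℚ) ^ (j + 1) • concatWH [a] (shW w (List.replicate j a))

lemma neg_one_pow_smul_shW_cons (x : Letter) (w : Word) (j : ℕ) :
    (-1 : ℚ) ^ j • shW (x :: w) (List.replicate j a) =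
      (-1 : ℚ) ^ j • concatWH [x] (shW w (List.replicate j a)) + signedShuffleLeadA (x :: w) j := by
  cases j with
  | zero => simp [signedShuffleLeadA, shW_nil_right, concatWH_single]
  | succ j =>
    rw [List.replicate_succ, shW_cons_cons, smul_add, signedShuffleLeadA, ← List.replicate_succ]

lemma sum_signedShuffleLeadA (u : Word) (n : ℕ) :
    ∑ p ∈ antidiagonal (n + 1), signedShuffleLeadA (u ++ List.replicate p.1 b) p.2 =
      -concatWH [a] (signedShuffle u n) := by
  rw [Nat.sum_antidiagonal_succ', signedShuffleLeadA, zero_add, signedShuffle, concatWH_sum,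
    ← sum_neg_distrib]
  refine sum_congr rfl fun p _ => ?_
  rw [signedShuffleLeadA, concatWH_smul, pow_succ, mul_neg_one, neg_smul]

lemma signedShuffle_cons_succ (x : Letter) (u : Word) (n : ℕ) :
    signedShuffle (x :: u) (n + 1) =
      concatWH [x] (signedShuffle u (n + 1)) - concatWH [a] (signedShuffle (x :: u) n) := by
  rw [sub_eq_add_neg, ← sum_signedShuffleLeadA, signedShuffle, signedShuffle, concatWH_sum,
    ← sum_add_distrib]
  refine sum_congr rfl fun p _ => ?_
  rw [concatWH_smul]
  exact neg_one_pow_smul_shW_cons x _ p.2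

lemma signedShuffle_nil_succ (n : ℕ) :
    signedShuffle [] (n + 1) =
      concatWH [b] (signedShuffle [] n) - concatWH [a] (signedShuffle [] n) := by
  have hlead := sum_signedShuffleLeadA [] n
  rw [Nat.sum_antidiagonal_succ] at hlead
  rw [sub_eq_add_neg, ← hlead, signedShuffle, Nat.sum_antidiagonal_succ, signedShuffle,
    concatWH_sum, add_left_comm, ← sum_add_distrib]
  congr 1
  · simp [signedShuffleLeadA, shW_nil_left, concatWH_single, List.replicate_succ]
  · refine sum_congr rfl fun p _ => ?_
    rw [concatWH_smul]
    exact neg_one_pow_smul_shW_cons b _ p.2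

lemma signedShuffle_nil (n : ℕ) : signedShuffle [] n = bmaPow n := by
  induction n with
  | zero => simp [signedShuffle, shW_nil_left, bmaPow_zero]
  | succ n ih => rw [signedShuffle_nil_succ, ih, bmaPow_succ]

lemma signedShuffle_singleton_a (k : ℕ) :
    signedShuffle [a] k = ∑ l ∈ range (k + 1),
      (-1 : ℚ) ^ l • concatWH (List.replicate (l + 1) a) (bmaPow (k - l)) := by
  induction k with
  | zero => simp [signedShuffle, shW_nil_right, bmaPow_zero, concatWH_single]
  | succ k ih =>
    rw [signedShuffle_cons_succ, signedShuffle_nil, ih, sum_range_succ' _ (k + 1), concatWH_sum,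
      sub_eq_add_neg, ← sum_neg_distrib, add_comm]
    congr 1
    · refine sum_congr rfl fun l _ => ?_
      rw [concatWH_smul, concatWH_concatWH, Nat.add_sub_add_right, pow_succ, mul_neg_one, neg_smul]
      rfl
    · simp

end SignedShuffle

lemma nablaOp_a_cons_replicate_b (k : ℕ) :
    nablaOp (a :: List.replicate k b) = tauH (a :: List.replicate k b) + signedShuffle [a] k := by
  rw [nablaOp, List.length_cons, List.length_replicate, sum_range_succ', signedShuffle,
    Nat.sum_antidiagonal_eq_sum_range_succ_mk, add_comm (tauH _)]
  congr 1
  · refine sum_congr rfl fun i hi => ?_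
    have hik : i ≤ k := Nat.lt_succ_iff.mp (mem_range.mp hi)
    rw [List.take_succ_cons, List.drop_succ_cons, List.take_replicate, List.drop_replicate,
      min_eq_left hik, tauH_replicate_b, shWH_single]
    rfl
  · rw [List.take_zero, List.drop_zero, shWH_nil]

lemma sum_Icc_one_eq_sum_range {M : Type*} [AddCommMonoid M] (f : ℕ → M) (m : ℕ) :
    ∑ j ∈ Icc 1 m, f j = ∑ l ∈ range m, f (l + 1) := by
  rw [← Ico_add_one_right_eq_Icc, sum_Ico_eq_sum_range, Nat.add_sub_cancel]
  simp only [add_comm 1]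

/-- For `r ≥ 2`: `∇(a b^{r-1}) = (-1)^{r+1}·3·a^r + Σ_{j=1}^{r-2} (-1)^{j+1} a^j (b-a)^{r-j}`,
products on the right-hand side being concatenation. -/
theorem statement7 (r : ℕ) (hr : 2 ≤ r) :
    nablaOp (Letter.a :: List.replicate (r - 1) Letter.b) =
      ((-1 : ℚ) ^ (r + 1) * 3) • Finsupp.single (List.replicate r Letter.a) (1 : ℚ) +
      ∑ j ∈ Finset.Icc 1 (r - 2),
        ((-1 : ℚ) ^ (j + 1)) • concatWH (List.replicate j Letter.a) (bmaPow (r - j)) := by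
  obtain ⟨m, rfl⟩ : ∃ m, r = m + 2 := ⟨r - 2, by omega⟩
  have hsum :
      ∑ j ∈ Icc 1 m, (-1 : ℚ) ^ (j + 1) • concatWH (List.replicate j a) (bmaPow (m + 2 - j)) =
      ∑ l ∈ range m, (-1 : ℚ) ^ l • concatWH (List.replicate (l + 1) a) (bmaPow (m + 1 - l)) := by
    rw [sum_Icc_one_eq_sum_range]
    refine sum_congr rfl fun l _ => ?_
    rw [show m + 2 - (l + 1) = m + 1 - l by omega, pow_succ, pow_succ, mul_neg_one, mul_neg_one,
      neg_neg]
  rw [show m + 2 - 1 = m + 1 from rfl, Nat.add_sub_cancel, nablaOp_a_cons_replicate_b,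
    tauH_a_cons_replicate_b, signedShuffle_singleton_a, sum_range_succ, sum_range_succ, hsum,
    Nat.sub_self,
    show m + 1 - m = 1 by omega, bmaPow_zero, bmaPow_one, concatWH_sub, concatWH_single,
    concatWH_single, concatWH_single, List.append_nil, ← List.replicate_succ']
  simp only [pow_succ]
  module
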